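/- If F and G are CDFs on ℝ with ∫(F−G)² finite, then E_{y∼P_G}[CRPS(F,y)] ≥ E_{y∼P_G}[CRPS(G,y)], i.e., CRPS is a proper scoring rule; moreover the score difference is zero iff F = G almost everywhere. -/

import Mathlib

open MeasureTheory Set

/-! By Fubini, `E_P[CRPS(F, y)] = ∫ E_P[(F z - 1{y ≤ z})²] dz`, and for fixed `z` the inner
expectation is the bias–variance split `(F z - G z)² + G z (1 - G z)` of the Bernoulli variable
`1{y ≤ z}`. Hence `E_P[CRPS(F, y)] - E_P[CRPS(G, y)] = ∫ (F - G)²`, which is nonnegative and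
vanishes exactly when `F = G` almost everywhere. -/

section Indicator

variable {Ω : Type*}

lemma sq_sub_indicator_one (s : Set Ω) (a : ℝ) (ω : Ω) :
    (a - s.indicator 1 ω) ^ 2 = a ^ 2 + (1 - 2 * a) * s.indicator 1 ω := by
  by_cases h : ω ∈ s <;> simp [h]; ring

variable [MeasurableSpace Ω] (P : Measure Ω) [IsProbabilityMeasure P] {s : Set Ω}

lemma integrable_sq_sub_indicator_one (hs : MeasurableSet s) (a : ℝ) :
    Integrable (fun ω => (a - s.indicator 1 ω) ^ 2) P := by
  simp_rw [sq_sub_indicator_one]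
  exact (integrable_const _).add (((integrable_const 1).indicator hs).const_mul _)

lemma integral_sq_sub_indicator_one (hs : MeasurableSet s) (a : ℝ) :
    ∫ ω, (a - s.indicator 1 ω) ^ 2 ∂P = (a - P.real s) ^ 2 + P.real s * (1 - P.real s) := by
  simp_rw [sq_sub_indicator_one]
  rw [integral_add (integrable_const _) (((integrable_const 1).indicator hs).const_mul _),
    integral_const, integral_const_mul, integral_indicator_one hs]
  simp only [probReal_univ, smul_eq_mul, one_mul]
  ring

end Indicator

lemma integral_crps_eq (P : Measure ℝ) [IsProbabilityMeasure P] {F G : ℝ → ℝ}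
    (hG : ∀ z, G z = P.real (Iic z)) (hF : Measurable F)
    (hint : Integrable fun z => (F z - G z) ^ 2 + G z * (1 - G z)) :
    ∫ y, (∫ z, (F z - if y ≤ z then (1 : ℝ) else 0) ^ 2) ∂P
      = ∫ z, ((F z - G z) ^ 2 + G z * (1 - G z)) := by
  have hind : ∀ y z : ℝ, (if y ≤ z then (1 : ℝ) else 0) = (Iic z).indicator 1 y := fun y z => by
    simp [indicator, mem_Iic]
  simp_rw [hind]
  set f : ℝ × ℝ → ℝ := fun p => (F p.2 - (Iic p.2).indicator 1 p.1) ^ 2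
  have hfmeas : Measurable f := by
    simp_rw [f, ← hind]
    exact ((hF.comp measurable_snd).sub (Measurable.ite (measurableSet_le measurable_fst
      measurable_snd) measurable_const measurable_const)).pow_const 2
  have hinner : ∀ z, ∫ y, f (y, z) ∂P = (F z - G z) ^ 2 + G z * (1 - G z) := fun z => by
    rw [hG]
    exact integral_sq_sub_indicator_one P measurableSet_Iic (F z)
  have hfint : Integrable f (P.prod volume) := by
    refine (integrable_prod_iff' hfmeas.aestronglyMeasurable).2 ⟨?_, ?_⟩
    · exact .of_forall fun z => integrable_sq_sub_indicator_one P measurableSet_Iic (F z)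
    · refine hint.congr (.of_forall fun z => ?_)
      simp_rw [f, Real.norm_of_nonneg (sq_nonneg _)]
      exact (hinner z).symm
  calc ∫ y, ∫ z, f (y, z) ∂volume ∂P = ∫ z, ∫ y, f (y, z) ∂P := integral_integral_swap hfint
    _ = _ := integral_congr_ae (.of_forall hinner)

lemma integral_sq_sub_eq_zero_iff {α : Type*} [MeasurableSpace α] {μ : Measure α} {f g : α → ℝ}
    (hint : Integrable (fun x => (f x - g x) ^ 2) μ) :
    ∫ x, (f x - g x) ^ 2 ∂μ = 0 ↔ f =ᵐ[μ] g := by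
  rw [integral_eq_zero_iff_of_nonneg (fun x => sq_nonneg _) hint]
  refine Filter.eventually_congr (.of_forall fun x => ?_)
  simp [sub_eq_zero]

theorem crps_proper_scoring_rule_general
    (P : Measure ℝ) [IsProbabilityMeasure P] (F G : ℝ → ℝ)
    (hG : ∀ z, G z = (P (Iic z)).toReal)
    (hFmeas : Measurable F)
    (hint₁ : Integrable (fun z => (F z - G z) ^ 2))
    (hint₂ : Integrable (fun z => G z * (1 - G z))) :
    (∫ y, (∫ z, (G z - if y ≤ z then (1 : ℝ) else 0) ^ 2) ∂P
        ≤ ∫ y, (∫ z, (F z - if y ≤ z then (1 : ℝ) else 0) ^ 2) ∂P)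
    ∧ ((∫ y, (∫ z, (F z - if y ≤ z then (1 : ℝ) else 0) ^ 2) ∂P
          = ∫ y, (∫ z, (G z - if y ≤ z then (1 : ℝ) else 0) ^ 2) ∂P)
        ↔ F =ᵐ[volume] G) := by
  have hGmeas : Measurable G := by
    have hG_cdf : G = ProbabilityTheory.cdf P :=
      funext fun z => (hG z).trans (ProbabilityTheory.cdf_eq_real P z).symm
    exact hG_cdf ▸ (ProbabilityTheory.cdf P).mono.measurable
  have hscore : ∀ H : ℝ → ℝ, Measurable H → Integrable (fun z => (H z - G z) ^ 2) →
      ∫ y, (∫ z, (H z - if y ≤ z then (1 : ℝ) else 0) ^ 2) ∂P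
        = (∫ z, (H z - G z) ^ 2) + ∫ z, G z * (1 - G z) := fun H hH hint => by
    rw [integral_crps_eq P hG hH (hint.add hint₂), integral_add hint hint₂]
  have hGG : ∫ z, (G z - G z) ^ 2 = 0 := by simp
  rw [hscore F hFmeas hint₁, hscore G hGmeas (by simp), hGG, zero_add]
  exact ⟨le_add_of_nonneg_left (integral_nonneg fun z => sq_nonneg _),
    add_eq_right.trans (integral_sq_sub_eq_zero_iff hint₁)⟩

/-- CRPS is a proper scoring rule: for CDFs `F`, `G` with `∫(F-G)² < ∞`,
`E_{y∼P_G}[CRPS(F,y)] ≥ E_{y∼P_G}[CRPS(G,y)]`, with equality iff `F = G` a.e. -/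
theorem crps_proper_scoring_rule
    (P : Measure ℝ) [IsProbabilityMeasure P] (F G : ℝ → ℝ)
    (hG : ∀ z, G z = (P (Iic z)).toReal)
    (hFmeas : Measurable F) (hFmono : Monotone F)
    (hFrange : ∀ z, F z ∈ Icc (0 : ℝ) 1)
    (hint₁ : Integrable (fun z => (F z - G z) ^ 2))
    (hint₂ : Integrable (fun z => G z * (1 - G z))) :
    (∫ y, (∫ z, (G z - if y ≤ z then (1 : ℝ) else 0) ^ 2) ∂P
        ≤ ∫ y, (∫ z, (F z - if y ≤ z then (1 : ℝ) else 0) ^ 2) ∂P)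
    ∧ ((∫ y, (∫ z, (F z - if y ≤ z then (1 : ℝ) else 0) ^ 2) ∂P
          = ∫ y, (∫ z, (G z - if y ≤ z then (1 : ℝ) else 0) ^ 2) ∂P)
        ↔ F =ᵐ[volume] G) :=
  crps_proper_scoring_rule_general P F G hG hFmeas hint₁ hint₂
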